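/- arXiv:2105.12064 — 7 statements merged into one kernel-verified Lean document; each statement's English description precedes it below -/
import Mathlib

section
/- Let n ≥ 1, 0 < α < 2, and let ρ : ℝⁿ → [0, ∞) be a continuous 2π-periodic function with mass M = ∫_{[0,2π)ⁿ} ρ(x) dx. Let x⁺ ∈ ℝⁿ be a point where ρ attains its global maximum ρ⁺ = ρ(x⁺). Then for every radius 0 < r ≤ π the (possibly infinite) integral of the nonnegative function z ↦ (ρ⁺ − ρ(x⁺ + z))·|z|^{−(n+α)} over ℝⁿ satisfies ∫_{ℝⁿ} (ρ⁺ − ρ(x⁺ + z))·|z|^{−(n+α)} dz ≥ r^{−(n+α)}·(Vₙ(r)·ρ⁺ − M), where Vₙ(r) denotes the Lebesgue volume of the n-dimensional ball of radius r. -/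
/-!
At the maximum the integrand is nonnegative, so the integral over `ℝⁿ` dominates the integral
over the ball `B(0, r)`, on which `|z|^{-(n+α)} ≥ r^{-(n+α)}`. It remains to see
`∫_{B(x⁺, r)} ρ ≤ M`: as `r ≤ π`, the ball lies in a translate of the period cube
`[0, 2π)ⁿ`, over which the nonnegative periodic `ρ` still integrates to `M`.
-/

open MeasureTheory Set Submodule Metric Pointwise

section PeriodCube

noncomputable def scaledBasisFun (ι : Type*) [Fintype ι] {a : ℝ} (ha : 0 < a) :
    Module.Basis ι ℝ (EuclideanSpace ℝ ι) :=
  (PiLp.basisFun 2 ℝ ι).unitsSMul fun _ => Units.mk0 a ha.ne'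

def periodCube (ι : Type*) (a : ℝ) : Set (EuclideanSpace ℝ ι) := {y | ∀ i, y i ∈ Ico 0 a}

variable {ι : Type*} [Fintype ι] {a : ℝ}

theorem scaledBasisFun_repr_apply (ha : 0 < a) (x : EuclideanSpace ℝ ι) (i : ι) :
    (scaledBasisFun ι ha).repr x i = a⁻¹ * x i := by
  simp [scaledBasisFun, Module.Basis.repr_unitsSMul, Units.smul_def]

theorem fundamentalDomain_scaledBasisFun (ha : 0 < a) :
    ZSpan.fundamentalDomain (scaledBasisFun ι ha) = periodCube ι a := by
  ext y
  simp only [ZSpan.mem_fundamentalDomain, scaledBasisFun_repr_apply, periodCube, mem_ofPred_eq,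
    mem_Ico, inv_mul_eq_div, le_div_iff₀ ha, div_lt_one ha, zero_mul]

theorem exists_eq_of_mem_span_scaledBasisFun (ha : 0 < a) {g : EuclideanSpace ℝ ι}
    (hg : g ∈ span ℤ (range (scaledBasisFun ι ha))) :
    ∃ k : ι → ℤ, g = (WithLp.equiv 2 (ι → ℝ)).symm (fun i => a * k i) := by
  choose k hk using (Module.Basis.mem_span_iff_repr_mem ℤ _ g).mp hg
  refine ⟨k, ?_⟩
  ext i
  have hki := hk i
  rw [scaledBasisFun_repr_apply, eq_intCast, eq_comm, inv_mul_eq_iff_eq_mul₀ ha.ne'] at hki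
  simpa using hki

theorem setIntegral_vadd_periodCube_eq (ha : 0 < a) {ρ : EuclideanSpace ℝ ι → ℝ}
    (hper : ∀ (x : EuclideanSpace ℝ ι) (k : ι → ℤ),
      ρ (x + (WithLp.equiv 2 (ι → ℝ)).symm (fun i => a * k i)) = ρ x)
    (c : EuclideanSpace ℝ ι) :
    ∫ y in c +ᵥ periodCube ι a, ρ y = ∫ y in periodCube ι a, ρ y := by
  set L := span ℤ (range (scaledBasisFun ι ha))
  have hfd : IsAddFundamentalDomain L (periodCube ι a) := by
    rw [← fundamentalDomain_scaledBasisFun ha]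
    exact ZSpan.isAddFundamentalDomain _ volume
  have : VAddCommClass (EuclideanSpace ℝ ι) L (EuclideanSpace ℝ ι) :=
    ⟨fun x g y => add_left_comm x (g : EuclideanSpace ℝ ι) y⟩
  -- the measure-theoretic instances for `L` are only found through `L.toAddSubgroup`
  have : VAddInvariantMeasure L (EuclideanSpace ℝ ι) volume :=
    inferInstanceAs (VAddInvariantMeasure L.toAddSubgroup _ _)
  have : MeasurableVAdd L (EuclideanSpace ℝ ι) :=
    inferInstanceAs (MeasurableVAdd L.toAddSubgroup _)
  refine (hfd.vadd_of_comm c).setIntegral_eq hfd fun ⟨g, hg⟩ x => ?_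
  obtain ⟨k, rfl⟩ := exists_eq_of_mem_span_scaledBasisFun ha hg
  exact (congrArg ρ (add_comm _ x)).trans (hper x k)

theorem ball_subset_vadd_periodCube (x : EuclideanSpace ℝ ι) :
    ball x (a / 2) ⊆
      (x - (WithLp.equiv 2 (ι → ℝ)).symm (fun _ => a / 2)) +ᵥ periodCube ι a := by
  intro y hy
  rw [mem_vadd_set_iff_neg_vadd_mem]
  intro i
  have hi : |y i - x i| < a / 2 :=
    (PiLp.norm_apply_le (y - x) i).trans_lt (mem_ball_iff_norm.mp hy)
  simp only [vadd_eq_add, neg_sub, PiLp.add_apply, PiLp.sub_apply, WithLp.equiv_symm_apply,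
    mem_Ico]
  constructor <;> linarith [abs_lt.mp hi]

theorem setIntegral_ball_le_setIntegral_periodCube (ha : 0 < a) {ρ : EuclideanSpace ℝ ι → ℝ}
    (hρ : LocallyIntegrable ρ) (hnonneg : ∀ x, 0 ≤ ρ x)
    (hper : ∀ (x : EuclideanSpace ℝ ι) (k : ι → ℤ),
      ρ (x + (WithLp.equiv 2 (ι → ℝ)).symm (fun i => a * k i)) = ρ x)
    (x : EuclideanSpace ℝ ι) {r : ℝ} (hr : r ≤ a / 2) :
    ∫ y in ball x r, ρ y ≤ ∫ y in periodCube ι a, ρ y := by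
  set c := x - (WithLp.equiv 2 (ι → ℝ)).symm (fun _ => a / 2)
  have hbdd : Bornology.IsBounded (c +ᵥ periodCube ι a) := by
    rw [← fundamentalDomain_scaledBasisFun ha]
    exact (ZSpan.fundamentalDomain_isBounded _).vadd c
  rw [← setIntegral_vadd_periodCube_eq ha hper c]
  exact setIntegral_mono_set
    ((hρ.integrableOn_isCompact hbdd.isCompact_closure).mono_set subset_closure)
    (ae_of_all _ hnonneg) ((ball_subset_ball hr).trans (ball_subset_vadd_periodCube x)).eventuallyLE

end PeriodCube

theorem ofReal_rpow_mul_setIntegral_ball_le_lintegral {E : Type*} [NormedAddCommGroup E]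
    [MeasurableSpace E] [OpensMeasurableSpace E] (μ : Measure E) {f : E → ℝ}
    (hf : ∀ z, 0 ≤ f z) (hf0 : f 0 = 0) {p : ℝ} (hp : 0 ≤ p) (r : ℝ) :
    ENNReal.ofReal (r ^ (-p) * ∫ z in ball 0 r, f z ∂μ) ≤
      ∫⁻ z, ENNReal.ofReal (f z * ‖z‖ ^ (-p)) ∂μ := by
  have hkernel : ∀ z ∈ ball (0 : E) r,
      ‖f z * r ^ (-p)‖ₑ ≤ ENNReal.ofReal (f z * ‖z‖ ^ (-p)) := by
    intro z hz
    rw [mem_ball_zero_iff] at hz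
    -- `‖0‖ ^ (-p)` is a junk value, harmless because `f 0 = 0`
    rcases eq_or_ne z 0 with rfl | hz0
    · simp [hf0]
    have hr : 0 ≤ r := (norm_nonneg z).trans hz.le
    rw [Real.enorm_of_nonneg (mul_nonneg (hf z) (Real.rpow_nonneg hr _))]
    exact ENNReal.ofReal_le_ofReal (mul_le_mul_of_nonneg_left
      (Real.rpow_le_rpow_of_nonpos (norm_pos_iff.2 hz0) hz.le (neg_nonpos.2 hp)) (hf z))
  calc ENNReal.ofReal (r ^ (-p) * ∫ z in ball 0 r, f z ∂μ)
      = ENNReal.ofReal (∫ z in ball 0 r, f z * r ^ (-p) ∂μ) := by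
        rw [integral_mul_const, mul_comm]
    _ ≤ ∫⁻ z in ball 0 r, ‖f z * r ^ (-p)‖ₑ ∂μ :=
        (Real.ofReal_le_enorm _).trans (enorm_integral_le_lintegral_enorm _)
    _ ≤ ∫⁻ z in ball 0 r, ENNReal.ofReal (f z * ‖z‖ ^ (-p)) ∂μ :=
        setLIntegral_mono' measurableSet_ball hkernel
    _ ≤ ∫⁻ z, ENNReal.ofReal (f z * ‖z‖ ^ (-p)) ∂μ := setLIntegral_le_lintegral _ _

theorem dissipation_lower_bound_at_max_general (n : ℕ) (α : ℝ) (hα : 0 < α)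
    (ρ : EuclideanSpace ℝ (Fin n) → ℝ) (hcont : Continuous ρ) (hnonneg : ∀ x, 0 ≤ ρ x)
    (hper : ∀ (x : EuclideanSpace ℝ (Fin n)) (k : Fin n → ℤ),
      ρ (x + (WithLp.equiv 2 (Fin n → ℝ)).symm (fun i => 2 * Real.pi * (k i))) = ρ x)
    (M : ℝ)
    (hM : M = ∫ y in {y : EuclideanSpace ℝ (Fin n) | ∀ i, y i ∈ Set.Ico 0 (2 * Real.pi)}, ρ y)
    (xp : EuclideanSpace ℝ (Fin n)) (hmax : ∀ x, ρ x ≤ ρ xp)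
    (r : ℝ) (hr : 0 < r) (hrpi : r ≤ Real.pi) :
    ENNReal.ofReal (r ^ (-((n : ℝ) + α)) *
        ((volume (Metric.ball (0 : EuclideanSpace ℝ (Fin n)) r)).toReal * ρ xp - M)) ≤
      ∫⁻ z, ENNReal.ofReal ((ρ xp - ρ (xp + z)) * ‖z‖ ^ (-((n : ℝ) + α))) := by
  have hmass : ∫ z in ball 0 r, ρ (xp + z) ≤ M := by
    have htrans := (measurePreserving_add_left volume xp).setIntegral_preimage_emb
      (measurableEmbedding_addLeft xp) ρ (ball xp r)
    rw [preimage_add_ball, sub_self] at htrans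
    rw [htrans, hM]
    exact setIntegral_ball_le_setIntegral_periodCube (by positivity) hcont.locallyIntegrable
      hnonneg hper xp (by linarith)
  have hdeficit : (volume (ball (0 : EuclideanSpace ℝ (Fin n)) r)).toReal * ρ xp - M ≤
      ∫ z in ball 0 r, (ρ xp - ρ (xp + z)) := by
    have hconst : IntegrableOn (fun _ => ρ xp) (ball (0 : EuclideanSpace ℝ (Fin n)) r) :=
      integrableOn_const
    have hint : IntegrableOn (fun z => ρ (xp + z)) (ball 0 r) :=
      ((hcont.comp (continuous_const_add xp)).continuousOn.integrableOn_compact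
        (isCompact_closedBall 0 r)).mono_set ball_subset_closedBall
    rw [integral_sub hconst hint, setIntegral_const, smul_eq_mul, measureReal_def]
    linarith
  calc _ ≤ ENNReal.ofReal (r ^ (-((n : ℝ) + α)) * ∫ z in ball 0 r, (ρ xp - ρ (xp + z))) :=
        ENNReal.ofReal_le_ofReal
          (mul_le_mul_of_nonneg_left hdeficit (Real.rpow_nonneg hr.le _))
    _ ≤ _ := ofReal_rpow_mul_setIntegral_ball_le_lintegral volume
        (fun z => sub_nonneg.2 (hmax _)) (by simp) (by positivity) r

/-- Dissipation lower bound at a maximum point: if `ρ ≥ 0` is continuous, `2π`-periodic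
on `ℝⁿ` with mass `M`, attaining its global maximum `ρ⁺` at `x⁺`, then for `0 < r ≤ π`,
`∫_{ℝⁿ} (ρ⁺ − ρ(x⁺+z))·|z|^{−(n+α)} dz ≥ r^{−(n+α)}·(Vₙ(r)·ρ⁺ − M)`,
where `Vₙ(r)` is the volume of the `n`-dimensional ball of radius `r`. -/
theorem dissipation_lower_bound_at_max (n : ℕ) (hn : 1 ≤ n) (α : ℝ) (hα : 0 < α) (hα2 : α < 2)
    (ρ : EuclideanSpace ℝ (Fin n) → ℝ) (hcont : Continuous ρ) (hnonneg : ∀ x, 0 ≤ ρ x)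
    (hper : ∀ (x : EuclideanSpace ℝ (Fin n)) (k : Fin n → ℤ),
      ρ (x + (WithLp.equiv 2 (Fin n → ℝ)).symm (fun i => 2 * Real.pi * (k i))) = ρ x)
    (M : ℝ)
    (hM : M = ∫ y in {y : EuclideanSpace ℝ (Fin n) | ∀ i, y i ∈ Set.Ico 0 (2 * Real.pi)}, ρ y)
    (xp : EuclideanSpace ℝ (Fin n)) (hmax : ∀ x, ρ x ≤ ρ xp)
    (r : ℝ) (hr : 0 < r) (hrpi : r ≤ Real.pi) :
    ENNReal.ofReal (r ^ (-((n : ℝ) + α)) *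
        ((volume (Metric.ball (0 : EuclideanSpace ℝ (Fin n)) r)).toReal * ρ xp - M)) ≤
      ∫⁻ z, ENNReal.ofReal ((ρ xp - ρ (xp + z)) * ‖z‖ ^ (-((n : ℝ) + α))) :=
  dissipation_lower_bound_at_max_general n α hα ρ hcont hnonneg hper M hM xp hmax r hr hrpi
end

section
/- Let n ≥ 1, let q ≥ 1 be a natural number, and let f : ℝⁿ → ℝ be a bounded measurable 2π-periodic function with zero average, i.e. ∫_{[0,2π)ⁿ} f(x) dx = 0. Then ∫_{[0,2π)ⁿ} ∫_{[0,2π)ⁿ} (f(x) − f(y))^{2q} dy dx ≥ 2·(2π)ⁿ·∫_{[0,2π)ⁿ} f(x)^{2q} dx. -/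
/-!
For even `m ≥ 4` and real `a, b`,
`(a - b)^m ≥ a^m + b^m - m (a b^(m-1) + a^(m-1) b)`: the right-hand side is the tangent line at `0`
of `z ↦ (a - z)^m - z^m + m a z^(m-1)` evaluated at `b`, and that function is convex because its
second derivative is a positive multiple of the tangent gap of the convex even power `z^(m-2)`.
For `m = 2` it holds with the factor `m` replaced by `1`, as the identity
`(a - b)^2 = a^2 + b^2 - 2ab`.
Integrating over the product of the period cell with itself, each cross term contains a factor
`∫ f = 0`, which leaves `2 (2π)^n ∫ f^m`.
-/

open MeasureTheory Set

theorem ConvexOn.add_mul_sub_le_of_hasDerivAt {S : Set ℝ} {f : ℝ → ℝ} {f' x y : ℝ}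
    (hf : ConvexOn ℝ S f) (hx : x ∈ S) (hy : y ∈ S) (hf' : HasDerivAt f f' x) :
    f x + f' * (y - x) ≤ f y := by
  rcases lt_trichotomy x y with hxy | rfl | hyx
  · have hslope := hf.le_slope_of_hasDerivAt hx hy hxy hf'
    rw [slope_def_field, le_div_iff₀ (sub_pos.2 hxy)] at hslope
    linarith
  · simp
  · have hslope := hf.slope_le_of_hasDerivAt hy hx hyx hf'
    rw [slope_def_field, div_le_iff₀ (sub_pos.2 hyx)] at hslope
    linarith

theorem Even.pow_add_mul_sub_le {k : ℕ} (hk : Even k) (x y : ℝ) :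
    x ^ k + k * x ^ (k - 1) * (y - x) ≤ y ^ k :=
  hk.convexOn_pow.add_mul_sub_le_of_hasDerivAt (mem_univ x) (mem_univ y) (hasDerivAt_pow k x)

theorem hasDerivAt_sub_pow_sub_pow_add_mul_pow (k : ℕ) (a z : ℝ) :
    HasDerivAt (fun z => (a - z) ^ (k + 2) - z ^ (k + 2) + (k + 2) * a * z ^ (k + 1))
      ((k + 2) * (-(a - z) ^ (k + 1) - z ^ (k + 1) + (k + 1) * a * z ^ k)) z := by
  have := (((hasDerivAt_id z).const_sub a).pow (k + 2)).sub (hasDerivAt_pow (k + 2) z)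
    |>.add ((hasDerivAt_pow (k + 1) z).const_mul ((k + 2) * a))
  refine this.congr_deriv ?_
  simp only [id]
  push_cast
  ring

theorem convexOn_sub_pow_sub_pow_add_mul_pow {k : ℕ} (hk : Even k) (a : ℝ) :
    ConvexOn ℝ univ fun z => (a - z) ^ (k + 2) - z ^ (k + 2) + (k + 2) * a * z ^ (k + 1) := by
  have hderiv2 (z : ℝ) : HasDerivAt
      (fun z => (k + 2) * (-(a - z) ^ (k + 1) - z ^ (k + 1) + (k + 1) * a * z ^ k))
      ((k + 2) * (k + 1) * ((a - z) ^ k - z ^ k + k * a * z ^ (k - 1))) z := by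
    have := ((((hasDerivAt_id z).const_sub a).pow (k + 1)).neg.sub (hasDerivAt_pow (k + 1) z)
      |>.add ((hasDerivAt_pow k z).const_mul ((k + 1) * a))).const_mul ((k : ℝ) + 2)
    refine this.congr_deriv ?_
    simp only [id]
    push_cast
    ring
  refine convexOn_of_hasDerivWithinAt2_nonneg convex_univ
    (fun z _ => (hasDerivAt_sub_pow_sub_pow_add_mul_pow k a z).continuousAt.continuousWithinAt)
    (fun z _ => (hasDerivAt_sub_pow_sub_pow_add_mul_pow k a z).hasDerivWithinAt)
    (fun z _ => (hderiv2 z).hasDerivWithinAt) fun z _ => mul_nonneg (by positivity) ?_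
  have htangent := hk.pow_add_mul_sub_le z (z - a)
  have hsymm : (a - z) ^ k = (z - a) ^ k := by rw [← neg_sub, hk.neg_pow]
  linarith

theorem pow_add_pow_sub_le_sub_pow {m : ℕ} (hm : Even m) (h4 : 4 ≤ m) (a b : ℝ) :
    a ^ m + b ^ m - m * (a * b ^ (m - 1) + a ^ (m - 1) * b) ≤ (a - b) ^ m := by
  obtain ⟨k, rfl⟩ : ∃ k, m = k + 2 + 2 := ⟨m - 4, by omega⟩
  have hk : Even (k + 2) := (Nat.even_add.mp hm).mpr even_two
  have htangent := (convexOn_sub_pow_sub_pow_add_mul_pow hk a).add_mul_sub_le_of_hasDerivAt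
    (mem_univ 0) (mem_univ b) (hasDerivAt_sub_pow_sub_pow_add_mul_pow (k + 2) a 0)
  norm_num at htangent
  rw [show k + 2 + 2 - 1 = k + 2 + 1 from rfl]
  push_cast
  linarith

theorem EuclideanSpace.volume_setOf_forall_mem_Ico {ι : Type*} [Fintype ι] (a b : ℝ) :
    volume {y : EuclideanSpace ℝ ι | ∀ i, y i ∈ Ico a b} =
      ENNReal.ofReal (b - a) ^ Fintype.card ι := by
  have hpre : {y : EuclideanSpace ℝ ι | ∀ i, y i ∈ Ico a b} =
      WithLp.ofLp ⁻¹' univ.pi fun _ => Ico a b := by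
    ext y
    simp
  rw [hpre, (PiLp.volume_preserving_ofLp ι).measure_preimage
    (MeasurableSet.univ_pi fun _ => measurableSet_Ico).nullMeasurableSet, volume_pi_pi]
  simp

section

variable {α : Type*} [MeasurableSpace α] {μ : Measure α} [IsFiniteMeasure μ] {g : α → ℝ} {C : ℝ}

theorem integrable_pow_of_abs_le (hg : Measurable g) (hC : ∀ x, |g x| ≤ C) (k : ℕ) :
    Integrable (fun x => g x ^ k) μ :=
  .of_bound (hg.pow_const k).aestronglyMeasurable (C ^ k) (ae_of_all _ fun x => by
    rw [Real.norm_eq_abs, abs_pow]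
    exact pow_le_pow_left₀ (abs_nonneg _) (hC x) k)

theorem two_mul_measureReal_mul_integral_pow_le_integral_integral_sub_pow
    (hg : Measurable g) (hC : ∀ x, |g x| ≤ C) (hmean : ∫ x, g x ∂μ = 0) {m k : ℕ} {c : ℝ}
    (hpt : ∀ a b : ℝ, a ^ m + b ^ m - c * (a * b ^ k + a ^ k * b) ≤ (a - b) ^ m) :
    2 * μ.real univ * ∫ x, g x ^ m ∂μ ≤ ∫ x, ∫ y, (g x - g y) ^ m ∂μ ∂μ := by
  have hpow := integrable_pow_of_abs_le (μ := μ) hg hC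
  have hg1 : Integrable g μ := by simpa using hpow 1
  have hfst := (hpow m).comp_fst μ
  have hsnd := (hpow m).comp_snd μ
  have hcross := (hg1.mul_prod (hpow k)).fun_add ((hpow k).mul_prod hg1)
  have hdiff : Integrable (fun z : α × α => (g z.1 - g z.2) ^ m) (μ.prod μ) :=
    integrable_pow_of_abs_le (hg.comp measurable_fst |>.sub (hg.comp measurable_snd))
      (C := C + C) (fun z => (abs_sub _ _).trans (add_le_add (hC _) (hC _))) m
  rw [← integral_prod _ hdiff]
  calc 2 * μ.real univ * ∫ x, g x ^ m ∂μ
      = ∫ z, g z.1 ^ m + g z.2 ^ m - c * (g z.1 * g z.2 ^ k + g z.1 ^ k * g z.2) ∂μ.prod μ := by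
        rw [integral_sub (hfst.fun_add hsnd) (hcross.const_mul c), integral_add hfst hsnd,
          integral_const_mul, integral_add (hg1.mul_prod (hpow k)) ((hpow k).mul_prod hg1),
          integral_fun_fst (fun x => g x ^ m), integral_fun_snd (fun x => g x ^ m),
          integral_prod_mul g (fun x => g x ^ k), integral_prod_mul (fun x => g x ^ k) g, hmean]
        simp only [smul_eq_mul]
        ring
    _ ≤ ∫ z, (g z.1 - g z.2) ^ m ∂μ.prod μ :=
        integral_mono ((hfst.fun_add hsnd).sub' (hcross.const_mul c)) hdiff fun z => hpt _ _

end

theorem double_integral_coercivity_general (n : ℕ) (q : ℕ) (hq : 1 ≤ q)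
    (f : EuclideanSpace ℝ (Fin n) → ℝ) (hmeas : Measurable f)
    (hbdd : ∃ C : ℝ, ∀ x, |f x| ≤ C)
    (hzero : ∫ x in {y : EuclideanSpace ℝ (Fin n) | ∀ i, y i ∈ Set.Ico 0 (2 * Real.pi)}, f x = 0) :
    2 * (2 * Real.pi) ^ n *
        ∫ x in {y : EuclideanSpace ℝ (Fin n) | ∀ i, y i ∈ Set.Ico 0 (2 * Real.pi)}, f x ^ (2 * q) ≤
      ∫ x in {y : EuclideanSpace ℝ (Fin n) | ∀ i, y i ∈ Set.Ico 0 (2 * Real.pi)},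
        ∫ y in {y : EuclideanSpace ℝ (Fin n) | ∀ i, y i ∈ Set.Ico 0 (2 * Real.pi)},
          (f x - f y) ^ (2 * q) := by
  obtain ⟨C, hC⟩ := hbdd
  set Q := {y : EuclideanSpace ℝ (Fin n) | ∀ i, y i ∈ Set.Ico 0 (2 * Real.pi)}
  have hvol : volume Q = ENNReal.ofReal (2 * Real.pi) ^ n := by
    rw [EuclideanSpace.volume_setOf_forall_mem_Ico, sub_zero, Fintype.card_fin]
  have : IsFiniteMeasure (volume.restrict Q) :=
    isFiniteMeasure_restrict.2 (hvol ▸ ENNReal.pow_ne_top ENNReal.ofReal_ne_top)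
  have hV : (volume.restrict Q).real univ = (2 * Real.pi) ^ n := by
    rw [measureReal_restrict_apply_univ, measureReal_def, hvol, ENNReal.toReal_pow,
      ENNReal.toReal_ofReal Real.two_pi_pos.le]
  rw [← hV]
  obtain rfl | hq2 := hq.eq_or_lt
  · exact two_mul_measureReal_mul_integral_pow_le_integral_integral_sub_pow hmeas hC hzero
      (k := 1) (c := 1) fun a b => le_of_eq (by ring)
  · exact two_mul_measureReal_mul_integral_pow_le_integral_integral_sub_pow hmeas hC hzero
      (pow_add_pow_sub_le_sub_pow (even_two_mul q) (by omega))

/-- Coercivity lemma: if `f : ℝⁿ → ℝ` is bounded, measurable, `2π`-periodic with zero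
average over the period cell, then for every natural `q ≥ 1`,
`∫∫_{[0,2π)ⁿ×[0,2π)ⁿ} (f(x) − f(y))^{2q} dy dx ≥ 2·(2π)ⁿ·∫_{[0,2π)ⁿ} f(x)^{2q} dx`. -/
theorem double_integral_coercivity (n : ℕ) (hn : 1 ≤ n) (q : ℕ) (hq : 1 ≤ q)
    (f : EuclideanSpace ℝ (Fin n) → ℝ) (hmeas : Measurable f)
    (hbdd : ∃ C : ℝ, ∀ x, |f x| ≤ C)
    (hper : ∀ (x : EuclideanSpace ℝ (Fin n)) (k : Fin n → ℤ),
      f (x + (WithLp.equiv 2 (Fin n → ℝ)).symm (fun i => 2 * Real.pi * (k i))) = f x)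
    (hzero : ∫ x in {y : EuclideanSpace ℝ (Fin n) | ∀ i, y i ∈ Set.Ico 0 (2 * Real.pi)}, f x = 0) :
    2 * (2 * Real.pi) ^ n *
        ∫ x in {y : EuclideanSpace ℝ (Fin n) | ∀ i, y i ∈ Set.Ico 0 (2 * Real.pi)}, f x ^ (2 * q) ≤
      ∫ x in {y : EuclideanSpace ℝ (Fin n) | ∀ i, y i ∈ Set.Ico 0 (2 * Real.pi)},
        ∫ y in {y : EuclideanSpace ℝ (Fin n) | ∀ i, y i ∈ Set.Ico 0 (2 * Real.pi)},
          (f x - f y) ^ (2 * q) :=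
  double_integral_coercivity_general n q hq f hmeas hbdd hzero
end

section
/- Let q ≥ 1 be a natural number, let l > 0, and let X, Y ∈ [−l, l]. Then (X − Y)^{2q} ≥ X^{2q} + Y^{2q} − P_q(X, Y), where P_q(X, Y) = 2XY if q = 1, and P_q(X, Y) = 2q·(X^{2q−1}·Y + X·Y^{2q−1}) if q ≥ 2. -/
lemma powA (a b : ℝ) (hb : 0 ≤ b) (hab : b ≤ a) (n : ℕ) :
    a ^ (n+1) - b ^ (n+1) ≤ (n+1 : ℝ) * a ^ n * (a - b) := by
  induction n with
  | zero => simp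
  | succ n ih =>
    have ha : 0 ≤ a := le_trans hb hab
    have hpow : b ^ (n+1) ≤ a ^ (n+1) := pow_le_pow_left₀ hb hab _
    have h2 : b ^ (n+1) * (a - b) ≤ a ^ (n+1) * (a - b) :=
      mul_le_mul_of_nonneg_right hpow (sub_nonneg.2 hab)
    have h1 : a * (a ^ (n+1) - b ^ (n+1)) ≤ ((n:ℝ)+1) * a ^ (n+1) * (a - b) := by
      calc a * (a ^ (n+1) - b ^ (n+1)) ≤ a * (((n:ℝ)+1) * a ^ n * (a - b)) :=
            mul_le_mul_of_nonneg_left ih ha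
        _ = ((n:ℝ)+1) * a ^ (n+1) * (a - b) := by rw [pow_succ a n]; ring
    have e : a ^ (n+1+1) - b ^ (n+1+1) =
        a * (a ^ (n+1) - b ^ (n+1)) + b ^ (n+1) * (a - b) := by ring
    have e4 : ((n:ℝ)+1+1) * a ^ (n+1) * (a-b) =
        ((n:ℝ)+1) * a ^ (n+1) * (a-b) + a ^ (n+1) * (a-b) := by ring
    push_cast
    linarith

lemma powB (a b : ℝ) (ha : 0 ≤ a) (hb : 0 ≤ b) (m : ℕ) :
    a ^ (m+3) + b ^ (m+3) + (m+3 : ℝ) * (a ^ (m+2) * b + a * b ^ (m+2))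
      ≤ (a + b) ^ (m+3) := by
  induction m with
  | zero => push_cast; nlinarith [mul_nonneg ha hb, sq_nonneg (a-b), sq_nonneg (a+b)]
  | succ m ih =>
    have hab : 0 ≤ a + b := add_nonneg ha hb
    have h1 := mul_le_mul_of_nonneg_left ih hab
    have e : (a+b) ^ (m+1+3) = (a+b) * (a+b) ^ (m+3) := by rw [pow_succ]; ring
    have e2 : (a+b) * (a ^ (m+3) + b ^ (m+3) + ((m:ℝ)+3) * (a ^ (m+2) * b + a * b ^ (m+2)))
        = a ^ (m+1+3) + b ^ (m+1+3) + ((m:ℝ)+1+3) * (a ^ (m+1+2) * b + a * b ^ (m+1+2))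
          + ((m:ℝ)+3) * (a^2 * b ^ (m+2) + b^2 * a ^ (m+2)) := by push_cast; ring
    have hextra : 0 ≤ ((m:ℝ)+3) * (a^2 * b ^ (m+2) + b^2 * a ^ (m+2)) := by positivity
    push_cast
    push_cast at h1 e2
    linarith [e2 ▸ h1]

-- aux: case 0 ≤ X, Y ≤ X
lemma powAux (k : ℕ) (X Y : ℝ) (hX : 0 ≤ X) (hXY : Y ≤ X) :
    X ^ (2*k+4) + Y ^ (2*k+4) ≤
      (X - Y) ^ (2*k+4) + (2*k+4 : ℝ) * (X ^ (2*k+3) * Y + X * Y ^ (2*k+3)) := by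
  rcases le_or_gt 0 Y with hY | hY
  · -- 0 ≤ Y ≤ X
    have hA := powA X (X - Y) (by linarith) (by linarith) (2*k+3)
    have hA' : X ^ (2*k+4) - (X-Y) ^ (2*k+4) ≤ (2*k+4 : ℝ) * X ^ (2*k+3) * Y := by
      have e : (2*k+3+1 : ℕ) = 2*k+4 := by omega
      rw [e] at hA
      push_cast at hA ⊢
      calc X ^ (2*k+4) - (X-Y) ^ (2*k+4) ≤ (2*(k:ℝ)+3+1) * X ^ (2*k+3) * (X - (X - Y)) := hA
        _ = (2*(k:ℝ)+4) * X ^ (2*k+3) * Y := by ring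
    have hY24 : Y ^ (2*k+4) = Y ^ (2*k+3) * Y := pow_succ Y (2*k+3)
    have hYp : 0 ≤ Y ^ (2*k+3) := pow_nonneg hY _
    have h3 : Y ^ (2*k+3) * Y ≤ Y ^ (2*k+3) * X := mul_le_mul_of_nonneg_left hXY hYp
    have h4 : Y ^ (2*k+3) * X ≤ (2*k+4 : ℝ) * (X * Y ^ (2*k+3)) := by
      have : (1:ℝ) ≤ (2*k+4 : ℝ) := by push_cast; linarith [Nat.cast_nonneg (α := ℝ) k]
      nlinarith [mul_nonneg hX hYp]
    push_cast at hA' h4 ⊢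
    linarith
  · -- Y < 0; set w = -Y
    have hB := powB X (-Y) hX (by linarith) (2*k+1)
    have e1 : (2*k+1+3 : ℕ) = 2*k+4 := by omega
    have e2 : (2*k+1+2 : ℕ) = 2*k+3 := by omega
    rw [e2, e1] at hB
    have o : Odd (2*k+3) := ⟨k+1, by omega⟩
    have ev : Even (2*k+4) := ⟨k+2, by omega⟩
    rw [ev.neg_pow, o.neg_pow] at hB
    have e3 : X + -Y = X - Y := by ring
    rw [e3] at hB
    push_cast at hB ⊢
    nlinarith [hB]

lemma powMain (k : ℕ) (X Y : ℝ) :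
    X ^ (2*k+4) + Y ^ (2*k+4) ≤
      (X - Y) ^ (2*k+4) + (2*k+4 : ℝ) * (X ^ (2*k+3) * Y + X * Y ^ (2*k+3)) := by
  have ev : Even (2*k+4) := ⟨k+2, by omega⟩
  have o : Odd (2*k+3) := ⟨k+1, by omega⟩
  have symm : (X - Y) ^ (2*k+4) = (Y - X) ^ (2*k+4) := by
    rw [show X - Y = -(Y - X) by ring, ev.neg_pow]
  rcases le_total Y X with hxy | hxy
  · rcases le_or_gt 0 X with hx | hx
    · exact powAux k X Y hx hxy
    · -- X < 0, Y ≤ X < 0 : apply aux to (-Y, -X)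
      have h := powAux k (-Y) (-X) (by linarith) (by linarith)
      rw [ev.neg_pow, ev.neg_pow, o.neg_pow, o.neg_pow,
        show -Y - -X = -(Y - X) by ring, ev.neg_pow, ← symm] at h
      push_cast at h ⊢
      nlinarith [h]
  · rcases le_or_gt 0 Y with hy | hy
    · have h := powAux k Y X hy hxy
      rw [← symm] at h
      push_cast at h ⊢
      linarith
    · have h := powAux k (-X) (-Y) (by linarith) (by linarith)
      rw [ev.neg_pow, ev.neg_pow, o.neg_pow, o.neg_pow,
        show -X - -Y = -(X - Y) by ring, ev.neg_pow] at h
      push_cast at h ⊢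
      nlinarith [h]

/-- Polynomial lower bound for even powers of differences: for `X, Y ∈ [−l, l]` and `q ≥ 1`,
`(X − Y)^{2q} ≥ X^{2q} + Y^{2q} − P_q(X, Y)`, where `P_q(X,Y) = 2XY` if `q = 1` and
`P_q(X,Y) = 2q·(X^{2q−1}Y + XY^{2q−1})` if `q ≥ 2`. -/
theorem even_power_difference_lower_bound (q : ℕ) (hq : 1 ≤ q) (l X Y : ℝ) (hl : 0 < l)
    (hX : X ∈ Set.Icc (-l) l) (hY : Y ∈ Set.Icc (-l) l) :
    X ^ (2 * q) + Y ^ (2 * q) -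
        (if q = 1 then 2 * X * Y
         else 2 * (q : ℝ) * (X ^ (2 * q - 1) * Y + X * Y ^ (2 * q - 1))) ≤
      (X - Y) ^ (2 * q) := by
  rcases eq_or_lt_of_le hq with h1 | h2
  · simp only [← h1]
    norm_num
    nlinarith [sq_nonneg (X - Y)]
  · have hq2 : 2 ≤ q := h2
    obtain ⟨k, rfl⟩ : ∃ k, q = k + 2 := ⟨q - 2, by omega⟩
    have hne : ¬ (k + 2 = 1) := by omega
    simp only [if_neg hne]
    have e1 : 2 * (k + 2) = 2*k+4 := by omega
    have e2 : 2 * (k + 2) - 1 = 2*k+3 := by omega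
    rw [e2, e1]
    have h := powMain k X Y
    have ec : (2 * ((k:ℝ) + 2)) = (2*k+4 : ℝ) := by push_cast; ring
    push_cast at h ⊢
    linarith
end

section
/- Let q ≥ 2 be a natural number and l > 0. Consider the expression W(Y) = −(l − Y)^{2q−1} − Y^{2q−1} + l^{2q−1} + (2q−1)·l·Y^{2q−2}. Then W(Y) > 0 for every Y with 0 < Y < l, and W(Y) < 0 for every Y with −l < Y < 0. -/
lemma binom_four_terms (a b : ℝ) (ha : 0 ≤ a) (hb : 0 ≤ b) (n : ℕ) (hn : 3 ≤ n) :
    a ^ n + (n : ℝ) * a ^ (n - 1) * b + (n : ℝ) * a * b ^ (n - 1) + b ^ n ≤ (a + b) ^ n := by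
  rw [add_pow]
  have hsub : ({0, 1, n - 1, n} : Finset ℕ) ⊆ Finset.range (n + 1) := by
    intro k hk
    simp only [Finset.mem_insert, Finset.mem_singleton] at hk
    rcases hk with rfl | rfl | rfl | rfl <;> simp [Finset.mem_range] <;> omega
  refine le_trans ?_ (Finset.sum_le_sum_of_subset_of_nonneg hsub
    (fun k _ _ => by positivity : ∀ k ∈ Finset.range (n + 1), k ∉ ({0, 1, n - 1, n} : Finset ℕ) →
      0 ≤ a ^ k * b ^ (n - k) * (n.choose k : ℝ)))
  have h01 : (0 : ℕ) ≠ 1 := by omega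
  have h0n1 : (0 : ℕ) ≠ n - 1 := by omega
  have h0n : (0 : ℕ) ≠ n := by omega
  have h1n1 : (1 : ℕ) ≠ n - 1 := by omega
  have h1n : (1 : ℕ) ≠ n := by omega
  have hn1n : n - 1 ≠ n := by omega
  rw [show ({0, 1, n - 1, n} : Finset ℕ) = insert 0 (insert 1 (insert (n - 1) {n})) from rfl]
  rw [Finset.sum_insert (by simp [h01, h0n1, h0n]),
      Finset.sum_insert (by simp [h1n1, h1n]),
      Finset.sum_insert (by simp [hn1n]), Finset.sum_singleton]
  have e1 : n - 0 = n := by omega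
  have e2 : n - (n - 1) = 1 := by omega
  have e3 : n - n = 0 := by omega
  rw [e1, e2, e3]
  have hc : n.choose (n - 1) = n := by
    simpa using Nat.choose_symm (show 1 ≤ n by omega)
  rw [hc]
  simp only [pow_zero, pow_one, Nat.choose_zero_right, Nat.choose_one_right,
    Nat.choose_self, Nat.cast_one, mul_one, one_mul]
  ring_nf
  nlinarith [sq_nonneg a, sq_nonneg b]

/-- Sign analysis of the boundary derivative: for a natural `q ≥ 2` and `l > 0`, the
expression `W(Y) = −(l − Y)^{2q−1} − Y^{2q−1} + l^{2q−1} + (2q−1)·l·Y^{2q−2}` is strictly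
positive for `0 < Y < l` and strictly negative for `−l < Y < 0`. -/
theorem boundary_derivative_sign (q : ℕ) (hq : 2 ≤ q) (l : ℝ) (hl : 0 < l) :
    (∀ Y : ℝ, 0 < Y → Y < l →
        0 < -(l - Y) ^ (2 * q - 1) - Y ^ (2 * q - 1) + l ^ (2 * q - 1) +
              (2 * (q : ℝ) - 1) * l * Y ^ (2 * q - 2)) ∧
    (∀ Y : ℝ, -l < Y → Y < 0 →
        -(l - Y) ^ (2 * q - 1) - Y ^ (2 * q - 1) + l ^ (2 * q - 1) +
            (2 * (q : ℝ) - 1) * l * Y ^ (2 * q - 2) < 0) := by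
  have hodd : Odd (2 * q - 1) := ⟨q - 1, by omega⟩
  have heven : Even (2 * q - 2) := ⟨q - 1, by omega⟩
  have hcast : ((2 * q - 1 : ℕ) : ℝ) = 2 * (q : ℝ) - 1 := by
    push_cast [Nat.cast_sub (by omega : 1 ≤ 2 * q)]; ring
  constructor
  · intro Y hY0 hYl
    have h1 : (l - Y) ^ (2 * q - 1) < l ^ (2 * q - 1) :=
      pow_lt_pow_left₀ (by linarith) (by linarith) (by omega)
    have h2 : Y ^ (2 * q - 1) = Y ^ (2 * q - 2) * Y := by
      rw [show 2 * q - 1 = (2 * q - 2) + 1 from by omega, pow_succ]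
    have h3 : 0 < Y ^ (2 * q - 2) := pow_pos hY0 _
    have hq3 : (3 : ℝ) ≤ 2 * (q : ℝ) - 1 := by
      have : (2 : ℝ) ≤ (q : ℝ) := by exact_mod_cast hq
      linarith
    nlinarith [mul_pos h3 (show (0 : ℝ) < (2 * (q : ℝ) - 1) * l - Y by nlinarith)]
  · intro Y hYl hY0
    set t : ℝ := -Y with ht
    have ht0 : 0 < t := by simp [ht]; linarith
    have htl : t < l := by simp [ht]; linarith
    have hYt : Y = -t := by simp [ht]
    have key := binom_four_terms l t (le_of_lt hl) (le_of_lt ht0) (2 * q - 1) (by omega)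
    rw [hcast] at key
    have e1 : 2 * q - 1 - 1 = 2 * q - 2 := by omega
    rw [e1] at key
    have hpowodd : Y ^ (2 * q - 1) = -(t ^ (2 * q - 1)) := by
      rw [hYt, hodd.neg_pow]
    have hpoweven : Y ^ (2 * q - 2) = t ^ (2 * q - 2) := by
      rw [hYt, heven.neg_pow]
    have hlt : l - Y = l + t := by rw [hYt]; ring
    rw [hpowodd, hpoweven, hlt]
    have hpos : 0 < (2 * (q : ℝ) - 1) * l ^ (2 * q - 2) * t := by
      have : (2 : ℝ) ≤ (q : ℝ) := by exact_mod_cast hq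
      have h := pow_pos hl (2 * q - 2)
      nlinarith [mul_pos h ht0]
    linarith
end

section
/- Let q ≥ 1 be a natural number and let 0 < ρ⁻ ≤ m ≤ ρ⁺ be real numbers. Then for all X, Y ∈ [ρ⁻ − m, ρ⁺ − m] with X ≠ Y one has ((2q−1)/(2q))·(X^{2q} − Y^{2q})/(X − Y)^{2q−1} + m·(X^{2q−1} − Y^{2q−1})/(X − Y)^{2q−1} > 0. Equivalently, for X > Y in this interval, ((2q−1)/(2q))·(X^{2q} − Y^{2q}) + m·(X^{2q−1} − Y^{2q−1}) > 0. -/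
lemma symm_weight_key (q : ℕ) (hq : 1 ≤ q) (m ρm : ℝ) (h1 : 0 < ρm) (a b : ℝ)
    (ha : ρm - m ≤ a) (hab : a < b) (hsgn : 0 ≤ a ∨ b ≤ 0) :
    (2 * (q : ℝ) - 1) / (2 * (q : ℝ)) * a ^ (2 * q) + m * a ^ (2 * q - 1) <
      (2 * (q : ℝ) - 1) / (2 * (q : ℝ)) * b ^ (2 * q) + m * b ^ (2 * q - 1) := by
  have hq2 : (2 : ℝ) * q ≠ 0 := by positivity
  have hq1 : 0 < 2 * (q : ℝ) - 1 := by
    have : (1:ℝ) ≤ q := by exact_mod_cast hq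
    linarith
  set g : ℝ → ℝ := fun t => (2 * (q : ℝ) - 1) / (2 * (q : ℝ)) * t ^ (2 * q) + m * t ^ (2 * q - 1)
    with hg
  have hd : ∀ t : ℝ, HasDerivAt g
      ((2 * (q : ℝ) - 1) / (2 * (q : ℝ)) * (((2*q : ℕ) : ℝ) * t ^ (2*q - 1))
        + m * (((2*q - 1 : ℕ) : ℝ) * t ^ (2*q - 1 - 1))) t := by
    intro t
    exact ((hasDerivAt_pow (2*q) t).const_mul _).add ((hasDerivAt_pow (2*q-1) t).const_mul m)
  have key : StrictMonoOn g (Set.Icc a b) := by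
    apply strictMonoOn_of_deriv_pos (convex_Icc a b)
    · exact (Continuous.continuousOn (by fun_prop))
    · intro t ht
      rw [interior_Icc] at ht
      rw [(hd t).deriv]
      have htm : 0 < t + m := by
        have : ρm - m < t := lt_of_le_of_lt ha ht.1
        linarith
      have ht0 : t ≠ 0 := by
        rcases hsgn with h | h
        · exact ne_of_gt (lt_of_le_of_lt h ht.1)
        · exact ne_of_lt (lt_of_lt_of_le ht.2 h)
      have heven : Even (2*q - 2) := ⟨q - 1, by omega⟩
      have hpow : 0 < t ^ (2*q - 2) := heven.pow_pos ht0
      have he1 : 2*q - 1 = (2*q - 2) + 1 := by omega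
      have he2 : 2*q - 1 - 1 = 2*q - 2 := by omega
      have hc1 : ((2*q : ℕ) : ℝ) = 2 * (q:ℝ) := by push_cast; ring
      have hc2 : ((2*q - 1 : ℕ) : ℝ) = 2 * (q:ℝ) - 1 := by
        have : 1 ≤ 2*q := by omega
        push_cast [this]; ring
      rw [he2, hc1, hc2, he1, pow_succ]
      have : (2 * (q : ℝ) - 1) / (2 * (q : ℝ)) * (2 * (q:ℝ) * (t ^ (2*q-2) * t))
          + m * ((2 * (q:ℝ) - 1) * t ^ (2*q-2))
          = (2 * (q : ℝ) - 1) * t ^ (2*q-2) * (t + m) := by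
        field_simp
      rw [this]
      positivity
  exact key (Set.left_mem_Icc.mpr hab.le) (Set.right_mem_Icc.mpr hab.le) hab

/-- Strict positivity of the symmetrized weight `Ψ_q`: for a natural `q ≥ 1` and
`0 < ρ⁻ ≤ m ≤ ρ⁺`, for all `X ≠ Y` in `[ρ⁻ − m, ρ⁺ − m]`,
`((2q−1)/(2q))·(X^{2q} − Y^{2q})/(X − Y)^{2q−1} + m·(X^{2q−1} − Y^{2q−1})/(X − Y)^{2q−1} > 0`;
equivalently, for `X > Y` in this interval,
`((2q−1)/(2q))·(X^{2q} − Y^{2q}) + m·(X^{2q−1} − Y^{2q−1}) > 0`. -/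
theorem symmetrized_weight_positive (q : ℕ) (hq : 1 ≤ q) (ρm m ρp : ℝ)
    (h1 : 0 < ρm) (h2 : ρm ≤ m) (h3 : m ≤ ρp) :
    (∀ X Y : ℝ, X ∈ Set.Icc (ρm - m) (ρp - m) → Y ∈ Set.Icc (ρm - m) (ρp - m) → X ≠ Y →
        0 < (2 * (q : ℝ) - 1) / (2 * (q : ℝ)) *
              ((X ^ (2 * q) - Y ^ (2 * q)) / (X - Y) ^ (2 * q - 1)) +
            m * ((X ^ (2 * q - 1) - Y ^ (2 * q - 1)) / (X - Y) ^ (2 * q - 1))) ∧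
    (∀ X Y : ℝ, X ∈ Set.Icc (ρm - m) (ρp - m) → Y ∈ Set.Icc (ρm - m) (ρp - m) → Y < X →
        0 < (2 * (q : ℝ) - 1) / (2 * (q : ℝ)) * (X ^ (2 * q) - Y ^ (2 * q)) +
            m * (X ^ (2 * q - 1) - Y ^ (2 * q - 1))) := by
  -- the strict increase of g on [Y, X]
  have main : ∀ X Y : ℝ, X ∈ Set.Icc (ρm - m) (ρp - m) → Y ∈ Set.Icc (ρm - m) (ρp - m) → Y < X →
      0 < (2 * (q : ℝ) - 1) / (2 * (q : ℝ)) * (X ^ (2 * q) - Y ^ (2 * q)) +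
          m * (X ^ (2 * q - 1) - Y ^ (2 * q - 1)) := by
    intro X Y hX hY hYX
    have key : (2 * (q : ℝ) - 1) / (2 * (q : ℝ)) * Y ^ (2 * q) + m * Y ^ (2 * q - 1) <
        (2 * (q : ℝ) - 1) / (2 * (q : ℝ)) * X ^ (2 * q) + m * X ^ (2 * q - 1) := by
      rcases le_or_gt 0 Y with h | h
      · exact symm_weight_key q hq m ρm h1 Y X hY.1 hYX (Or.inl h)
      rcases le_or_gt X 0 with h' | h'
      · exact symm_weight_key q hq m ρm h1 Y X hY.1 hYX (Or.inr h')
      · calc (2 * (q : ℝ) - 1) / (2 * (q : ℝ)) * Y ^ (2 * q) + m * Y ^ (2 * q - 1)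
            < (2 * (q : ℝ) - 1) / (2 * (q : ℝ)) * (0:ℝ) ^ (2 * q) + m * (0:ℝ) ^ (2 * q - 1) :=
              symm_weight_key q hq m ρm h1 Y 0 hY.1 h (Or.inr le_rfl)
          _ < _ := symm_weight_key q hq m ρm h1 0 X (by linarith) h' (Or.inl le_rfl)
    linarith
  constructor
  · intro X Y hX hY hne
    have hodd : Odd (2*q - 1) := ⟨q - 1, by omega⟩
    have hform : (2 * (q : ℝ) - 1) / (2 * (q : ℝ)) *
              ((X ^ (2 * q) - Y ^ (2 * q)) / (X - Y) ^ (2 * q - 1)) +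
            m * ((X ^ (2 * q - 1) - Y ^ (2 * q - 1)) / (X - Y) ^ (2 * q - 1))
        = ((2 * (q : ℝ) - 1) / (2 * (q : ℝ)) * (X ^ (2 * q) - Y ^ (2 * q)) +
            m * (X ^ (2 * q - 1) - Y ^ (2 * q - 1))) / (X - Y) ^ (2 * q - 1) := by
      ring
    rw [hform]
    rcases lt_or_gt_of_ne hne with h | h
    · -- X < Y : numerator negative, denominator negative
      have hnum := main Y X hY hX h
      have hden : (X - Y) ^ (2*q - 1) < 0 := hodd.pow_neg (by linarith)
      apply div_pos_of_neg_of_neg _ hden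
      nlinarith [hnum]
    · exact div_pos (main X Y hX hY h) (pow_pos (by linarith) _)
  · exact main
end

section
/- Let q ≥ 1 be a natural number and let 0 < ρ⁻ ≤ m ≤ ρ⁺ be real numbers. Then there exists a constant C > 0 (depending on q, m, ρ⁻, ρ⁺) such that for all X, Y ∈ [ρ⁻ − m, ρ⁺ − m] with X ≠ Y one has ((2q−1)/(2q))·(X^{2q} − Y^{2q})/(X − Y)^{2q−1} + m·(X^{2q−1} − Y^{2q−1})/(X − Y)^{2q−1} ≥ C. -/
/-!
Put `n = 2q - 1`, which is odd, and `G_c(t) = n/(n+1) t^(n+1) + c t^n`. For `Y < X` the weight is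
`(G_m(X) - G_m(Y)) / (X - Y)^n`. Since `G_c'(t) = n t^(n-1) (t + c)` with `n - 1` even, `G_c` is
monotone on `[-c, ∞)`; applied with `c = m - ρ⁻` this gives
`G_m(X) - G_m(Y) ≥ ρ⁻ (X^n - Y^n)`. Finally `(X - Y)^n ≤ 2^(n-1) (X^n - Y^n)` for odd `n`,
so the weight is at least `ρ⁻ / 2^(n-1)`; the case `X < Y` follows by symmetry.
-/

open Set

section OrderedRing

variable {R : Type*} [CommRing R] [LinearOrder R] [IsStrictOrderedRing R] {n : ℕ} {X Y : R}

lemma sub_pow_le_pow_sub_pow (hY : 0 ≤ Y) (hYX : Y ≤ X) (hn : n ≠ 0) :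
    (X - Y) ^ n ≤ X ^ n - Y ^ n := by
  have := pow_add_pow_le (sub_nonneg.2 hYX) hY hn
  rw [sub_add_cancel] at this
  exact le_sub_iff_add_le.2 this

lemma Odd.sub_pow_le_two_pow_mul_sub_pow (hn : Odd n) (hYX : Y ≤ X) :
    (X - Y) ^ n ≤ 2 ^ (n - 1) * (X ^ n - Y ^ n) := by
  have hn0 : n ≠ 0 := hn.pos.ne'
  have hsub : 0 ≤ X ^ n - Y ^ n := sub_nonneg.2 (hn.pow_le_pow.2 hYX)
  have hone : (1 : R) ≤ 2 ^ (n - 1) := one_le_pow₀ one_le_two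
  rcases le_total 0 Y with hY | hY
  · exact (sub_pow_le_pow_sub_pow hY hYX hn0).trans (le_mul_of_one_le_left hsub hone)
  rcases le_total 0 X with hX | hX
  · simpa [← sub_eq_add_neg, hn.neg_pow] using add_pow_le hX (neg_nonneg.2 hY) n
  · have := sub_pow_le_pow_sub_pow (neg_nonneg.2 hX) (neg_le_neg hYX) hn0
    rw [neg_sub_neg, hn.neg_pow, hn.neg_pow, neg_sub_neg] at this
    exact this.trans (le_mul_of_one_le_left hsub hone)

end OrderedRing

lemma Odd.monotoneOn_pow_succ_add_pow {n : ℕ} (hn : Odd n) {c : ℝ} :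
    MonotoneOn (fun t : ℝ => n / (n + 1) * t ^ (n + 1) + c * t ^ n) (Ici (-c)) := by
  have hderiv : ∀ t : ℝ,
      HasDerivAt (fun t : ℝ => n / (n + 1) * t ^ (n + 1) + c * t ^ n)
        (n * t ^ (n - 1) * (t + c)) t := by
    intro t
    refine (((hasDerivAt_pow (n + 1) t).const_mul ((n : ℝ) / (n + 1))).add
      ((hasDerivAt_pow n t).const_mul c)).congr_deriv ?_
    rw [Nat.add_sub_cancel, ← pow_sub_one_mul hn.pos.ne' t]
    push_cast
    field_simp
  refine monotoneOn_of_hasDerivWithinAt_nonneg (convex_Ici _)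
    (fun t _ => (hderiv t).continuousAt.continuousWithinAt)
    (fun t _ => (hderiv t).hasDerivWithinAt) fun t ht => ?_
  rw [interior_Ici, mem_Ioi] at ht
  have heven : Even (n - 1) := Nat.Odd.sub_odd hn odd_one
  exact mul_nonneg (mul_nonneg n.cast_nonneg (heven.pow_nonneg t)) (by linarith)

/-- The weight `Ψ_q` of the paper, indexed by the odd exponent `n = 2q - 1`. -/
noncomputable def symmetrizedWeight (n : ℕ) (m X Y : ℝ) : ℝ :=
  n / (n + 1) * ((X ^ (n + 1) - Y ^ (n + 1)) / (X - Y) ^ n) + m * ((X ^ n - Y ^ n) / (X - Y) ^ n)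

lemma symmetrizedWeight_comm {n : ℕ} (hn : Odd n) (m X Y : ℝ) :
    symmetrizedWeight n m X Y = symmetrizedWeight n m Y X := by
  rw [symmetrizedWeight, symmetrizedWeight, ← neg_sub X Y, hn.neg_pow, ← neg_sub (X ^ (n + 1)),
    ← neg_sub (X ^ n), neg_div_neg_eq, neg_div_neg_eq]

lemma div_two_pow_le_symmetrizedWeight {n : ℕ} (hn : Odd n) {ρ m X Y : ℝ} (hρ : 0 < ρ)
    (hY : ρ - m ≤ Y) (hYX : Y < X) :
    ρ / 2 ^ (n - 1) ≤ symmetrizedWeight n m X Y := by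
  have hmono := hn.monotoneOn_pow_succ_add_pow (c := m - ρ)
    (show Y ∈ Ici (-(m - ρ)) by rw [mem_Ici]; linarith)
    (show X ∈ Ici (-(m - ρ)) by rw [mem_Ici]; linarith) hYX.le
  have hgain : ρ * (X ^ n - Y ^ n) ≤
      n / (n + 1) * (X ^ (n + 1) - Y ^ (n + 1)) + m * (X ^ n - Y ^ n) := by linarith
  rw [symmetrizedWeight, mul_div_assoc', mul_div_assoc', ← add_div,
    le_div_iff₀ (pow_pos (sub_pos.2 hYX) n), div_mul_eq_mul_div, div_le_iff₀ (by positivity)]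
  calc ρ * (X - Y) ^ n ≤ ρ * (2 ^ (n - 1) * (X ^ n - Y ^ n)) := by
        gcongr
        exact hn.sub_pow_le_two_pow_mul_sub_pow hYX.le
    _ = ρ * (X ^ n - Y ^ n) * 2 ^ (n - 1) := by ring
    _ ≤ _ := by gcongr

theorem symmetrized_weight_uniform_lower_bound_general (q : ℕ) (hq : 1 ≤ q) (ρm m ρp : ℝ)
    (h1 : 0 < ρm) :
    ∃ C : ℝ, 0 < C ∧
      ∀ X Y : ℝ, X ∈ Set.Icc (ρm - m) (ρp - m) → Y ∈ Set.Icc (ρm - m) (ρp - m) → X ≠ Y →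
        C ≤ (2 * (q : ℝ) - 1) / (2 * (q : ℝ)) *
              ((X ^ (2 * q) - Y ^ (2 * q)) / (X - Y) ^ (2 * q - 1)) +
            m * ((X ^ (2 * q - 1) - Y ^ (2 * q - 1)) / (X - Y) ^ (2 * q - 1)) := by
  have hn : Odd (2 * q - 1) := ⟨q - 1, by omega⟩
  have hweight : ∀ X Y : ℝ, (2 * (q : ℝ) - 1) / (2 * (q : ℝ)) *
        ((X ^ (2 * q) - Y ^ (2 * q)) / (X - Y) ^ (2 * q - 1)) +
      m * ((X ^ (2 * q - 1) - Y ^ (2 * q - 1)) / (X - Y) ^ (2 * q - 1)) =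
        symmetrizedWeight (2 * q - 1) m X Y := by
    intro X Y
    rw [symmetrizedWeight, Nat.sub_add_cancel (by omega), Nat.cast_sub (by omega)]
    push_cast
    ring
  refine ⟨ρm / 2 ^ (2 * q - 1 - 1), by positivity, fun X Y hX hY hXY => ?_⟩
  rw [hweight]
  rcases hXY.lt_or_gt with hXY | hYX
  · rw [symmetrizedWeight_comm hn]
    exact div_two_pow_le_symmetrizedWeight hn h1 hX.1 hXY
  · exact div_two_pow_le_symmetrizedWeight hn h1 hY.1 hYX

/-- Uniform positive lower bound for the symmetrized weight `Ψ_q`: for a natural `q ≥ 1`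
and `0 < ρ⁻ ≤ m ≤ ρ⁺`, there is a constant `C > 0` such that for all `X ≠ Y` in
`[ρ⁻ − m, ρ⁺ − m]`,
`((2q−1)/(2q))·(X^{2q} − Y^{2q})/(X − Y)^{2q−1} + m·(X^{2q−1} − Y^{2q−1})/(X − Y)^{2q−1} ≥ C`. -/
theorem symmetrized_weight_uniform_lower_bound (q : ℕ) (hq : 1 ≤ q) (ρm m ρp : ℝ)
    (h1 : 0 < ρm) (h2 : ρm ≤ m) (h3 : m ≤ ρp) :
    ∃ C : ℝ, 0 < C ∧
      ∀ X Y : ℝ, X ∈ Set.Icc (ρm - m) (ρp - m) → Y ∈ Set.Icc (ρm - m) (ρp - m) → X ≠ Y →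
        C ≤ (2 * (q : ℝ) - 1) / (2 * (q : ℝ)) *
              ((X ^ (2 * q) - Y ^ (2 * q)) / (X - Y) ^ (2 * q - 1)) +
            m * ((X ^ (2 * q - 1) - Y ^ (2 * q - 1)) / (X - Y) ^ (2 * q - 1)) :=
  symmetrized_weight_uniform_lower_bound_general q hq ρm m ρp h1
end

section
/- Let 0 < ρ⁻ ≤ m ≤ ρ⁺ be real numbers. Then for all X, Y ∈ [ρ⁻ − m, ρ⁺ − m] with X ≠ Y one has (3/4)·(X⁴ − Y⁴)/(X − Y)³ + m·(X³ − Y³)/(X − Y)³ ≥ (1/4)·(ρ⁻/ρ⁺)·ρ⁻. -/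
/-!
Write `a = X + m`, `b = Y + m ∈ [ρ⁻, ρ⁺]`. Clearing the denominator, `Ψ₂ (X - Y)²` is a polynomial
which, as a quadratic in `m`, completes to the square
`12 (a + b) Ψ₂ (X - Y)² = 2 (2 (X² + XY + Y²) + 3m (X + Y))² + (X - Y)² ((a + b)² + 2ab)`.
Dropping the square leaves `((a + b)² + 2ab) / (12 (a + b))`, which is at least `ρ⁻² / (4ρ⁺)`
because `ab ≥ ρ⁻²` and `2ρ⁻ ≤ a + b ≤ 2ρ⁺`.
-/

/-- `Ψ₂ (X - Y)²` after cancelling the common factor `X - Y`. -/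
noncomputable def weightNumerator (m X Y : ℝ) : ℝ :=
  3 / 4 * (X ^ 3 + X ^ 2 * Y + X * Y ^ 2 + Y ^ 3) + m * (X ^ 2 + X * Y + Y ^ 2)

lemma weight_eq_weightNumerator_div {X Y : ℝ} (hXY : X ≠ Y) (m : ℝ) :
    3 / 4 * ((X ^ 4 - Y ^ 4) / (X - Y) ^ 3) + m * ((X ^ 3 - Y ^ 3) / (X - Y) ^ 3) =
      weightNumerator m X Y / (X - Y) ^ 2 := by
  have hd : X - Y ≠ 0 := sub_ne_zero.2 hXY
  unfold weightNumerator
  field_simp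
  ring

lemma twelve_mul_weightNumerator (m X Y : ℝ) :
    12 * ((X + m) + (Y + m)) * weightNumerator m X Y =
      2 * (2 * (X ^ 2 + X * Y + Y ^ 2) + 3 * m * (X + Y)) ^ 2 +
        (X - Y) ^ 2 * (((X + m) + (Y + m)) ^ 2 + 2 * ((X + m) * (Y + m))) := by
  unfold weightNumerator
  ring

lemma three_mul_sq_mul_add_le {ρm ρp a b : ℝ} (hρm : 0 ≤ ρm)
    (ha : a ∈ Set.Icc ρm ρp) (hb : b ∈ Set.Icc ρm ρp) :
    3 * ρm ^ 2 * (a + b) ≤ ρp * ((a + b) ^ 2 + 2 * (a * b)) := by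
  obtain ⟨ha₁, ha₂⟩ := ha
  obtain ⟨hb₁, hb₂⟩ := hb
  have hab : ρm ^ 2 ≤ a * b := by nlinarith
  -- `ρ⁺ s² ≥ 2ρ⁻² s` from `s ≥ 2ρ⁻`, `ρ⁺ ≥ ρ⁻`, and `2ρ⁺ ρ⁻² ≥ ρ⁻² s` from `s ≤ 2ρ⁺`
  nlinarith [mul_le_mul_of_nonneg_left hab (hρm.trans (ha₁.trans ha₂)),
    mul_nonneg (mul_nonneg hρm (by linarith : (0 : ℝ) ≤ a + b)) (by linarith : 0 ≤ ρp - ρm),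
    mul_nonneg (mul_nonneg (by linarith : 0 ≤ ρp) (by linarith : 0 ≤ a + b - 2 * ρm))
      (by linarith : (0 : ℝ) ≤ a + b),
    mul_nonneg (sq_nonneg ρm) (by linarith : 0 ≤ 2 * ρp - (a + b))]

lemma sq_mul_sq_sub_le_weightNumerator {ρm ρp m X Y : ℝ} (hρm : 0 < ρm)
    (hX : X + m ∈ Set.Icc ρm ρp) (hY : Y + m ∈ Set.Icc ρm ρp) :
    ρm ^ 2 * (X - Y) ^ 2 ≤ 4 * ρp * weightNumerator m X Y := by
  have hs : 0 < (X + m) + (Y + m) := by linarith [hX.1, hY.1]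
  have hbound := three_mul_sq_mul_add_le hρm.le hX hY
  have hid := twelve_mul_weightNumerator m X Y
  have hρp : 0 ≤ ρp := by linarith [hX.1, hX.2]
  rw [← mul_le_mul_iff_of_pos_left (by positivity : (0 : ℝ) < 12 * ((X + m) + (Y + m)))]
  nlinarith [mul_le_mul_of_nonneg_left hbound (sq_nonneg (X - Y)),
    mul_nonneg hρp (sq_nonneg (2 * (X ^ 2 + X * Y + Y ^ 2) + 3 * m * (X + Y)))]

theorem symmetrized_weight_q2_lower_bound_general (ρm m ρp : ℝ)
    (h1 : 0 < ρm)
    (X Y : ℝ) (hX : X ∈ Set.Icc (ρm - m) (ρp - m)) (hY : Y ∈ Set.Icc (ρm - m) (ρp - m))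
    (hXY : X ≠ Y) :
    1 / 4 * (ρm / ρp) * ρm ≤
      3 / 4 * ((X ^ 4 - Y ^ 4) / (X - Y) ^ 3) + m * ((X ^ 3 - Y ^ 3) / (X - Y) ^ 3) := by
  have shift {Z : ℝ} (hZ : Z ∈ Set.Icc (ρm - m) (ρp - m)) : Z + m ∈ Set.Icc ρm ρp :=
    ⟨by linarith [hZ.1], by linarith [hZ.2]⟩
  have hρp : 0 < ρp := by linarith [hX.1, hX.2]
  have hd : 0 < (X - Y) ^ 2 := by positivity [sub_ne_zero.2 hXY]
  have key := sq_mul_sq_sub_le_weightNumerator h1 (shift hX) (shift hY)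
  rw [weight_eq_weightNumerator_div hXY, le_div_iff₀ hd,
    show 1 / 4 * (ρm / ρp) * ρm * (X - Y) ^ 2 = ρm ^ 2 * (X - Y) ^ 2 / (4 * ρp) by
      field_simp,
    div_le_iff₀ (by positivity)]
  linarith

/-- Explicit quantitative lower bound for the symmetrized weight `Ψ₂`: for
`0 < ρ⁻ ≤ m ≤ ρ⁺` and all `X ≠ Y` in `[ρ⁻ − m, ρ⁺ − m]`,
`(3/4)·(X⁴ − Y⁴)/(X − Y)³ + m·(X³ − Y³)/(X − Y)³ ≥ (1/4)·(ρ⁻/ρ⁺)·ρ⁻`. -/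
theorem symmetrized_weight_q2_lower_bound (ρm m ρp : ℝ)
    (h1 : 0 < ρm) (h2 : ρm ≤ m) (h3 : m ≤ ρp)
    (X Y : ℝ) (hX : X ∈ Set.Icc (ρm - m) (ρp - m)) (hY : Y ∈ Set.Icc (ρm - m) (ρp - m))
    (hXY : X ≠ Y) :
    1 / 4 * (ρm / ρp) * ρm ≤
      3 / 4 * ((X ^ 4 - Y ^ 4) / (X - Y) ^ 3) + m * ((X ^ 3 - Y ^ 3) / (X - Y) ^ 3) :=
  symmetrized_weight_q2_lower_bound_general ρm m ρp h1 X Y hX hY hXY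
end
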